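/- arXiv:2604.13498 — 2 statements merged into one kernel-verified Lean document; each statement's English description precedes it below -/
import Mathlib

section
/- Let V ⊆ ℝ³ be a linear subspace and P the orthogonal projection of ℝ³ onto V, let Φ be a Young function, and let f: (tQ')₁ × ℝ^{3×3} → [0,∞) be a Carathéodory function (measurable in x, continuous in ξ) with f(x,ξ) ≤ β(1+Φ(|ξ|)) for some β>0. Then for every t>0 and every ξ_α ∈ V² one has the equality of infima inf{ ∫_{(tQ')₁} f(x, (ξ_α+∇_αφ | ∇₃φ)) dx : φ ∈ 𝒜_t(V) } = inf{ ∫_{(tQ')₁} f̄(x, (ξ_α+∇_αφ | ∇₃φ)) dx : φ ∈ 𝒜_t }, i.e. the cell infimum over tangent-space-valued Lipschitz test maps equals the unconstrained cell infimum for the penalized integrand f̄. -/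
open MeasureTheory Filter

noncomputable section

abbrev V3 : Type := Fin 3 → ℝ
abbrev V2 : Type := Fin 2 → ℝ
abbrev M33 : Type := Matrix (Fin 3) (Fin 3) ℝ
abbrev M32 : Type := Matrix (Fin 3) (Fin 2) ℝ

/-- `Φ : [0,∞) → [0,∞)` is a Young function: continuous, convex, positive for `t > 0`,
`Φ(t)/t → 0` as `t → 0⁺` and `Φ(t)/t → ∞` as `t → ∞`. -/
def IsYoung (Φ : ℝ → ℝ) : Prop :=
  ContinuousOn Φ (Set.Ici 0) ∧ ConvexOn ℝ (Set.Ici 0) Φ ∧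
  (∀ t : ℝ, 0 < t → 0 < Φ t) ∧
  Tendsto (fun t => Φ t / t) (nhdsWithin 0 (Set.Ioi 0)) (nhds 0) ∧
  Tendsto (fun t => Φ t / t) atTop atTop

/-- The Δ₂ condition (at infinity). -/
def Delta2 (Φ : ℝ → ℝ) : Prop :=
  ∃ α : ℝ, 0 < α ∧ ∃ t₀ : ℝ, 0 ≤ t₀ ∧ ∀ t, t₀ ≤ t → Φ (2 * t) ≤ α * Φ t

/-- The ∇₂ condition. -/
def Nabla2 (Φ : ℝ → ℝ) : Prop :=
  ∃ β : ℝ, 0 < β ∧ ∃ t₀ : ℝ, 1 < t₀ ∧ ∀ t, t₀ ≤ t → Φ t ≤ (1 / (2 * β)) * Φ (β * t)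

/-- Frobenius norm of a real matrix. -/
def frobNorm {m n : ℕ} (ξ : Matrix (Fin m) (Fin n) ℝ) : ℝ :=
  Real.sqrt (∑ i, ∑ j, (ξ i j) ^ 2)

/-- The open cylinder `(tQ')₁ = (−t/2,t/2)² × (−1/2,1/2)`. -/
def openCyl (t : ℝ) : Set V3 := {x | |x 0| < t / 2 ∧ |x 1| < t / 2 ∧ |x 2| < 1 / 2}

/-- The lateral boundary `∂((−t/2,t/2)²) × (−1/2,1/2)`. -/
def latBdry (t : ℝ) : Set V3 := {x | max |x 0| |x 1| = t / 2 ∧ |x 2| < 1 / 2}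

/-- The (a.e. defined, via Rademacher) matrix of partial derivatives of a Lipschitz map:
row `i`, column `j` is `∂φᵢ/∂xⱼ`. -/
def gradm (φ : V3 → V3) (x : V3) : M33 :=
  Matrix.of fun i j => fderiv ℝ φ x (Pi.single j 1) i

/-- Planar-gradient matrix (3×2) of a map on `ℝ²`. -/
def gradm2 (ψ : V2 → V3) (y : V2) : M32 :=
  Matrix.of fun i j => fderiv ℝ ψ y (Pi.single j 1) i

/-- The 3×3 matrix `(ξ_α + ∇_αφ | ∇₃φ)`: first two columns of `A` shifted by `ξ_α`,
third column untouched. -/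
def withCol (ξα : M32) (A : M33) : M33 :=
  Matrix.of fun i j => (if h : (j : ℕ) < 2 then ξα i ⟨(j : ℕ), h⟩ else 0) + A i j

/-- The admissible class `𝒜_t`: Lipschitz maps vanishing on the lateral boundary. -/
def AdmSet (t : ℝ) : Set (V3 → V3) :=
  {φ | (∃ K : NNReal, LipschitzWith K φ) ∧ ∀ x ∈ latBdry t, φ x = 0}

/-- The constrained admissible class `𝒜_t(V)`: members of `𝒜_t` with values in `V`. -/
def AdmVSet (t : ℝ) (V : Submodule ℝ V3) : Set (V3 → V3) :=
  {φ | φ ∈ AdmSet t ∧ ∀ x, φ x ∈ V}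

/-- The cell energy `∫_{(tQ')₁} f(x, (ξ_α + ∇_αφ | ∇₃φ)) dx`. -/
def cellE (f : V3 → M33 → ℝ) (ξα : M32) (t : ℝ) (φ : V3 → V3) : ℝ :=
  ∫ x in openCyl t, f x (withCol ξα (gradm φ x))

/-- The cell infimum over a class `S` of test maps. -/
def cellInf (f : V3 → M33 → ℝ) (ξα : M32) (t : ℝ) (S : Set (V3 → V3)) : ℝ :=
  sInf ((fun φ => cellE f ξα t φ) '' S)

/-- The constrained tangentially homogenized density `Tf⁰hom(V, ξ_α)`. -/
def Tf0hom (f : V3 → M33 → ℝ) (V : Submodule ℝ V3) (ξα : M32) : ℝ :=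
  liminf (fun t : ℝ => (t ^ 2)⁻¹ * cellInf f ξα t (AdmVSet t V)) atTop

/-- The unconstrained homogenized density (liminf of the scaled cell infima over `𝒜_t`). -/
def homDens (f : V3 → M33 → ℝ) (ξα : M32) : ℝ :=
  liminf (fun t : ℝ => (t ^ 2)⁻¹ * cellInf f ξα t (AdmSet t)) atTop

/-- `P` is the orthogonal projection of `ℝ³` onto the subspace `V` (with respect to the
Euclidean inner product). -/
def IsOrthProjOnto (V : Submodule ℝ V3) (P : V3 → V3) : Prop :=
  IsLinearMap ℝ P ∧ (∀ x, P x ∈ V) ∧ (∀ x ∈ V, P x = x) ∧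
    (∀ x : V3, ∀ v ∈ V, (∑ i, (x i - P x i) * v i) = 0)

/-- Column-wise action `𝐏ξ = (Pξ₁ | Pξ₂ | Pξ₃)` of a projection on 3×3 matrices. -/
def Pmat (P : V3 → V3) (ξ : M33) : M33 :=
  Matrix.of fun i j => P (fun k => ξ k j) i

/-- The penalized integrand `f̄(x,ξ) = f(x,𝐏ξ) + Φ(|ξ − 𝐏ξ|)`. -/
def fbar (Φ : ℝ → ℝ) (P : V3 → V3) (f : V3 → M33 → ℝ) : V3 → M33 → ℝ :=
  fun x ξ => f x (Pmat P ξ) + Φ (frobNorm (ξ - Pmat P ξ))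

/-- Carathéodory function: measurable in `x`, continuous in `ξ`. -/
def Caratheodory (f : V3 → M33 → ℝ) : Prop :=
  (∀ ξ, Measurable fun x => f x ξ) ∧ (∀ x, Continuous fun ξ => f x ξ)

/-- (H1): 1-periodicity in the planar variable. -/
def H1per (f : V3 → M33 → ℝ) : Prop :=
  ∀ (x : V3) (ξ : M33) (i : Fin 3), (i : ℕ) < 2 → f (x + Pi.single i 1) ξ = f x ξ

/-- (H2): `Φ`-coercivity and `Φ`-growth, for a.e. `x` and all `ξ`. -/
def H2growth (Φ : ℝ → ℝ) (α β : ℝ) (f : V3 → M33 → ℝ) : Prop :=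
  ∀ᵐ x : V3 ∂volume, ∀ ξ : M33, α * Φ (frobNorm ξ) ≤ f x ξ ∧ f x ξ ≤ β * (1 + Φ (frobNorm ξ))

/-- `ξ_α ∈ V²`: both columns of the 3×2 matrix belong to `V`. -/
def colsIn (V : Submodule ℝ V3) (ξα : M32) : Prop :=
  ∀ j : Fin 2, (fun i => ξα i j) ∈ V

/-- The open unit square `Q' = (−1/2,1/2)²`. -/
def sq2 : Set V2 := {y | |y 0| < 1 / 2 ∧ |y 1| < 1 / 2}

/-!
For `φ` with values in `V` the penalization vanishes: the columns of `(ξ_α + ∇_αφ | ∇₃φ)` lie in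
`V` and `Φ 0 = 0`, so the energies over `𝒜_t(V)` are among the penalized energies over `𝒜_t`.
Conversely, for `φ ∈ 𝒜_t` the map `Pφ` lies in `𝒜_t(V)` with `∇(Pφ) = 𝐏∇φ` a.e.; as `ξ_α ∈ V²`
the shift by `ξ_α` commutes with `𝐏`, and `f(x, 𝐏ξ) ≤ f̄(x, ξ)` bounds the energy of `Pφ` by
the penalized energy of `φ`, which is a finite integral by the growth bound.
-/

open Set

lemma frobNorm_nonneg {m n : ℕ} (ξ : Matrix (Fin m) (Fin n) ℝ) : 0 ≤ frobNorm ξ :=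
  Real.sqrt_nonneg _

@[simp]
lemma frobNorm_zero {m n : ℕ} : frobNorm (0 : Matrix (Fin m) (Fin n) ℝ) = 0 := by
  simp [frobNorm]

lemma continuous_frobNorm {m n : ℕ} : Continuous (frobNorm : Matrix (Fin m) (Fin n) ℝ → ℝ) := by
  unfold frobNorm
  fun_prop

namespace IsYoung

variable {Φ : ℝ → ℝ}

lemma map_zero (hΦ : IsYoung Φ) : Φ 0 = 0 := by
  obtain ⟨hcont, -, -, hlim, -⟩ := hΦ
  have hΦ0 : Tendsto Φ (nhdsWithin 0 (Ioi 0)) (nhds (Φ 0)) :=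
    (hcont 0 self_mem_Ici).mono Ioi_subset_Ici_self
  have hΦ0' : Tendsto Φ (nhdsWithin 0 (Ioi 0)) (nhds 0) := by
    have h := hlim.mul (tendsto_id.mono_left nhdsWithin_le_nhds : Tendsto (fun t : ℝ => t) _ _)
    rw [zero_mul] at h
    refine h.congr' ?_
    filter_upwards [self_mem_nhdsWithin] with t ht using div_mul_cancel₀ _ (ne_of_gt ht)
  exact tendsto_nhds_unique hΦ0 hΦ0'

lemma nonneg (hΦ : IsYoung Φ) {s : ℝ} (hs : 0 ≤ s) : 0 ≤ Φ s := by
  rcases hs.eq_or_lt with rfl | hs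
  · exact hΦ.map_zero.ge
  · exact (hΦ.2.2.1 s hs).le

lemma continuous_comp_frobNorm (hΦ : IsYoung Φ) {X : Type*}
    [TopologicalSpace X] {m n : ℕ} {g : X → Matrix (Fin m) (Fin n) ℝ} (hg : Continuous g) :
    Continuous fun x => Φ (frobNorm (g x)) :=
  hΦ.1.comp_continuous (continuous_frobNorm.comp hg) fun _ => frobNorm_nonneg _

end IsYoung

lemma continuous_Pmat (L : V3 →L[ℝ] V3) : Continuous (Pmat L) := by
  unfold Pmat
  fun_prop

lemma withCol_eq_add (ξα : M32) (A : M33) : withCol ξα A = withCol ξα 0 + A := by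
  ext i j
  simp [withCol]

lemma Pmat_add {P : V3 → V3} (hadd : ∀ x y, P (x + y) = P x + P y) (A B : M33) :
    Pmat P (A + B) = Pmat P A + Pmat P B := by
  ext i j
  exact congrFun (hadd (fun k => A k j) (fun k => B k j)) i

section ColumnsIn

variable {V : Submodule ℝ V3}

lemma Pmat_eq_self {P : V3 → V3} (hfix : ∀ x ∈ V, P x = x) {A : M33}
    (hA : ∀ j, (fun i => A i j) ∈ V) : Pmat P A = A := by
  ext i j
  exact congrFun (hfix _ (hA j)) i

lemma withCol_col_mem {ξα : M32} (hξα : colsIn V ξα) {A : M33}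
    (hA : ∀ j, (fun i => A i j) ∈ V) (j : Fin 3) : (fun i => withCol ξα A i j) ∈ V := by
  by_cases hj : (j : ℕ) < 2
  · simp only [withCol, Matrix.of_apply, dif_pos hj]
    exact V.add_mem (hξα ⟨j, hj⟩) (hA j)
  · simpa only [withCol, Matrix.of_apply, dif_neg hj, zero_add] using hA j

lemma Pmat_withCol {P : V3 → V3} (hadd : ∀ x y, P (x + y) = P x + P y) (hfix : ∀ x ∈ V, P x = x)
    {ξα : M32} (hξα : colsIn V ξα) (A : M33) :
    Pmat P (withCol ξα A) = withCol ξα (Pmat P A) := by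
  have hξα0 : Pmat P (withCol ξα 0) = withCol ξα 0 :=
    Pmat_eq_self hfix (withCol_col_mem hξα fun _ => V.zero_mem)
  rw [withCol_eq_add, Pmat_add hadd, hξα0, ← withCol_eq_add]

/-- Partial derivatives are limits of difference quotients, which lie in the closed subspace `V`
(and `fderiv` is `0` where `φ` is not differentiable). -/
lemma gradm_col_mem {φ : V3 → V3} (hφ : ∀ x, φ x ∈ V) (x : V3) (j : Fin 3) :
    (fun i => gradm φ x i j) ∈ V := by
  by_cases hd : DifferentiableAt ℝ φ x
  · exact (Submodule.closed_of_finiteDimensional V).mem_of_tendsto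
      (hd.hasFDerivAt.lim_real (Pi.single j 1))
      (Eventually.of_forall fun c => V.smul_mem c (V.sub_mem (hφ _) (hφ _)))
  · simp only [gradm, fderiv_zero_of_not_differentiableAt hd]
    exact V.zero_mem

end ColumnsIn

lemma gradm_clm_comp (L : V3 →L[ℝ] V3) {φ : V3 → V3} {x : V3} (hφ : DifferentiableAt ℝ φ x) :
    gradm (fun y => L (φ y)) x = Pmat L (gradm φ x) := by
  ext i j
  change fderiv ℝ (L ∘ φ) x (Pi.single j 1) i = _
  rw [(L.hasFDerivAt.comp x hφ.hasFDerivAt).fderiv]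
  rfl

lemma abs_gradm_le {φ : V3 → V3} {K : NNReal} (hφ : LipschitzWith K φ) (x : V3) (i j : Fin 3) :
    |gradm φ x i j| ≤ K :=
  calc |gradm φ x i j| ≤ ‖fderiv ℝ φ x (Pi.single j 1)‖ :=
        (Real.norm_eq_abs _).symm.trans_le (norm_le_pi_norm _ i)
    _ ≤ ‖fderiv ℝ φ x‖ * ‖(Pi.single j 1 : V3)‖ := (fderiv ℝ φ x).le_opNorm _
    _ ≤ K := by simpa [Pi.norm_single] using norm_fderiv_le_of_lipschitz ℝ hφ

lemma measurable_gradm (φ : V3 → V3) :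
    Measurable (β := Fin 3 → Fin 3 → ℝ) (gradm φ) :=
  measurable_pi_lambda _ fun i => measurable_pi_lambda _ fun j =>
    (measurable_pi_apply i).comp (measurable_fderiv_apply_const ℝ φ (Pi.single j 1))

lemma volume_openCyl_lt_top (t : ℝ) : volume (openCyl t) < ⊤ := by
  have hsub : openCyl t ⊆ Set.pi univ fun _ => Icc (-(|t| + 1)) (|t| + 1) := by
    rintro x ⟨h0, h1, h2⟩ i -
    rw [mem_Icc, ← abs_le]
    have := le_abs_self t
    have := abs_nonneg t
    fin_cases i <;> simp only [Fin.zero_eta, Fin.mk_one, Fin.reduceFinMk] <;> linarith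
  exact (measure_mono hsub).trans_lt (isCompact_univ_pi fun _ => isCompact_Icc).measure_lt_top

lemma Caratheodory.measurable_comp {f : V3 → M33 → ℝ} (hf : Caratheodory f) {g : V3 → M33}
    (hg : Measurable (β := Fin 3 → Fin 3 → ℝ) g) : Measurable fun x => f x (g x) := by
  have hu : Measurable (Function.uncurry fun (ξ : Fin 3 → Fin 3 → ℝ) x => f x ξ) :=
    measurable_uncurry_of_continuous_of_measurable (ι := Fin 3 → Fin 3 → ℝ)
      (fun x => hf.2 x) hf.1
  exact hu.comp (hg.prodMk measurable_id)

lemma caratheodory_fbar {Φ : ℝ → ℝ} (hΦ : IsYoung Φ) (L : V3 →L[ℝ] V3) {f : V3 → M33 → ℝ}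
    (hf : Caratheodory f) : Caratheodory (fbar Φ L f) :=
  ⟨fun _ => (hf.1 _).add_const _, fun x => ((hf.2 x).comp (continuous_Pmat L)).add
    (hΦ.continuous_comp_frobNorm (continuous_id.sub (continuous_Pmat L)))⟩

open scoped Matrix.Norms.Elementwise in
/-- The gradients of a Lipschitz map stay in a compact set, on which the continuous majorant `G`
is bounded. -/
lemma Caratheodory.integrableOn_withCol_gradm {F : V3 → M33 → ℝ} (hF : Caratheodory F)
    (hF0 : ∀ x ξ, 0 ≤ F x ξ) {G : M33 → ℝ} (hG : Continuous G) (hFG : ∀ x ξ, F x ξ ≤ G ξ)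
    (ξα : M32) {φ : V3 → V3} {K : NNReal} (hφ : LipschitzWith K φ) (t : ℝ) :
    IntegrableOn (fun x => F x (withCol ξα (gradm φ x))) (openCyl t) := by
  obtain ⟨C, hC⟩ := (isCompact_closedBall (withCol ξα 0) K).bddAbove_image hG.continuousOn
  have hmeas : Measurable fun x => F x (withCol ξα (gradm φ x)) := by
    have h : (fun x => withCol ξα (gradm φ x)) = fun x => withCol ξα 0 + gradm φ x :=
      funext fun x => withCol_eq_add ξα _
    exact hF.measurable_comp (h ▸ measurable_const.add (measurable_gradm φ))
  refine Measure.integrableOn_of_bounded (M := C) (volume_openCyl_lt_top t).ne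
    hmeas.aestronglyMeasurable (Eventually.of_forall fun x => ?_)
  have hx : withCol ξα (gradm φ x) ∈ Metric.closedBall (withCol ξα 0) K := by
    rw [mem_closedBall_iff_norm, withCol_eq_add, add_sub_cancel_left,
      Matrix.norm_le_iff K.coe_nonneg]
    exact abs_gradm_le hφ x
  rw [Real.norm_eq_abs, abs_of_nonneg (hF0 _ _)]
  exact (hFG _ _).trans (hC ⟨_, hx, rfl⟩)

lemma cellE_nonneg {F : V3 → M33 → ℝ} (hF0 : ∀ x ξ, 0 ≤ F x ξ) (ξα : M32) (t : ℝ)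
    (φ : V3 → V3) : 0 ≤ cellE F ξα t φ :=
  integral_nonneg fun _ => hF0 _ _

section Projection

variable {Φ : ℝ → ℝ} {V : Submodule ℝ V3} {f : V3 → M33 → ℝ} {ξα : M32} {t : ℝ}

lemma fbar_nonneg (hΦ : IsYoung Φ) {P : V3 → V3} (hf0 : ∀ x ξ, 0 ≤ f x ξ) (x : V3) (ξ : M33) :
    0 ≤ fbar Φ P f x ξ :=
  add_nonneg (hf0 _ _) (hΦ.nonneg (frobNorm_nonneg _))

lemma cellE_fbar_eq (hΦ0 : Φ 0 = 0) {P : V3 → V3} (hfix : ∀ x ∈ V, P x = x)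
    (hξα : colsIn V ξα) {φ : V3 → V3} (hφ : ∀ x, φ x ∈ V) :
    cellE (fbar Φ P f) ξα t φ = cellE f ξα t φ := by
  refine integral_congr_ae (Eventually.of_forall fun x => ?_)
  simp only [fbar, Pmat_eq_self hfix (withCol_col_mem hξα (gradm_col_mem hφ x)), sub_self,
    frobNorm_zero, hΦ0, add_zero]

lemma integrableOn_fbar_withCol_gradm (hΦ : IsYoung Φ) (L : V3 →L[ℝ] V3) (hf : Caratheodory f)
    (hf0 : ∀ x ξ, 0 ≤ f x ξ) {β : ℝ} (hgrowth : ∀ x ξ, f x ξ ≤ β * (1 + Φ (frobNorm ξ)))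
    (ξα : M32) {φ : V3 → V3} {K : NNReal} (hφ : LipschitzWith K φ) (t : ℝ) :
    IntegrableOn (fun x => fbar Φ L f x (withCol ξα (gradm φ x))) (openCyl t) := by
  have hP := continuous_Pmat L
  exact (caratheodory_fbar hΦ L hf).integrableOn_withCol_gradm
    (fbar_nonneg hΦ hf0) (G := fun ξ => β * (1 + Φ (frobNorm (Pmat L ξ))) + Φ (frobNorm (ξ - Pmat L ξ)))
    (((continuous_const.add (hΦ.continuous_comp_frobNorm hP)).const_mul β).add
      (hΦ.continuous_comp_frobNorm (continuous_id.sub hP)))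
    (fun x ξ => add_le_add_left (hgrowth _ _) _) ξα hφ t

lemma cellE_clm_comp_le (hΦ : IsYoung Φ) {L : V3 →L[ℝ] V3} (hfix : ∀ x ∈ V, L x = x)
    (hξα : colsIn V ξα) (hf0 : ∀ x ξ, 0 ≤ f x ξ) {φ : V3 → V3} {K : NNReal}
    (hφ : LipschitzWith K φ)
    (hint : IntegrableOn (fun x => fbar Φ L f x (withCol ξα (gradm φ x))) (openCyl t)) :
    cellE f ξα t (fun y => L (φ y)) ≤ cellE (fbar Φ L f) ξα t φ := by
  refine integral_mono_of_nonneg (Eventually.of_forall fun _ => hf0 _ _) hint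
    (ae_restrict_of_ae (hφ.ae_differentiableAt.mono fun x hx => ?_))
  dsimp only
  rw [gradm_clm_comp L hx, ← Pmat_withCol (map_add L) hfix hξα]
  exact le_add_of_nonneg_right (hΦ.nonneg (frobNorm_nonneg _))

lemma clm_comp_mem_admVSet {L : V3 →L[ℝ] V3} (hrange : ∀ x, L x ∈ V) {φ : V3 → V3}
    (hφ : φ ∈ AdmSet t) : (fun y => L (φ y)) ∈ AdmVSet t V := by
  obtain ⟨⟨K, hK⟩, hbdry⟩ := hφ
  exact ⟨⟨⟨_, L.lipschitz.comp hK⟩, fun x hx => by simp [hbdry x hx]⟩, fun x => hrange _⟩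

lemma zero_mem_admVSet : (0 : V3 → V3) ∈ AdmVSet t V :=
  ⟨⟨⟨0, LipschitzWith.const 0⟩, fun _ _ => rfl⟩, fun _ => V.zero_mem⟩

end Projection

lemma sInf_image_eq_of_forall_exists_le {α : Type*} {S T : Set α} {E F : α → ℝ}
    (hS : S.Nonempty) (hF : BddBelow (F '' T)) (hST : S ⊆ T) (heq : ∀ φ ∈ S, F φ = E φ)
    (hle : ∀ φ ∈ T, ∃ ψ ∈ S, E ψ ≤ F φ) : sInf (E '' S) = sInf (F '' T) := by
  have hsub : E '' S ⊆ F '' T := by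
    rintro _ ⟨φ, hφ, rfl⟩
    exact ⟨φ, hST hφ, heq φ hφ⟩
  refine le_antisymm (le_csInf (hS.image E |>.mono hsub) ?_) (csInf_le_csInf hF (hS.image E) hsub)
  rintro _ ⟨φ, hφ, rfl⟩
  obtain ⟨ψ, hψ, hψφ⟩ := hle φ hφ
  exact (csInf_le (hF.mono hsub) ⟨ψ, hψ, rfl⟩).trans hψφ

theorem stmt_0_general
    (Φ : ℝ → ℝ) (hΦ : IsYoung Φ)
    (V : Submodule ℝ V3) (P : V3 → V3) (hP : IsOrthProjOnto V P)
    (f : V3 → M33 → ℝ) (hf : Caratheodory f)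
    (hf0 : ∀ x ξ, 0 ≤ f x ξ)
    (β : ℝ) (hgrowth : ∀ x ξ, f x ξ ≤ β * (1 + Φ (frobNorm ξ)))
    (t : ℝ) (ξα : M32) (hξα : colsIn V ξα) :
    cellInf f ξα t (AdmVSet t V) = cellInf (fbar Φ P f) ξα t (AdmSet t) := by
  obtain ⟨L, rfl⟩ : ∃ L : V3 →L[ℝ] V3, ⇑L = P :=
    ⟨LinearMap.toContinuousLinearMap (IsLinearMap.mk' P hP.1), rfl⟩
  obtain ⟨-, hrange, hfix, -⟩ := hP
  refine sInf_image_eq_of_forall_exists_le ⟨0, zero_mem_admVSet⟩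
    ⟨0, ?_⟩ (fun φ hφ => hφ.1) (fun φ hφ => cellE_fbar_eq hΦ.map_zero hfix hξα hφ.2)
    (fun φ hφ => ⟨_, clm_comp_mem_admVSet hrange hφ, ?_⟩)
  · rintro _ ⟨φ, -, rfl⟩
    exact cellE_nonneg (fbar_nonneg hΦ hf0) ξα t φ
  · obtain ⟨K, hK⟩ := hφ.1
    exact cellE_clm_comp_le hΦ hfix hξα hf0 hK
      (integrableOn_fbar_withCol_gradm hΦ L hf hf0 hgrowth ξα hK t)

/-- the constrained cell infimum over tangent-space-valued Lipschitz test maps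
equals the unconstrained cell infimum for the penalized integrand `f̄`. -/
theorem stmt_0
    (Φ : ℝ → ℝ) (hΦ : IsYoung Φ)
    (V : Submodule ℝ V3) (P : V3 → V3) (hP : IsOrthProjOnto V P)
    (f : V3 → M33 → ℝ) (hf : Caratheodory f)
    (hf0 : ∀ x ξ, 0 ≤ f x ξ)
    (β : ℝ) (hβ : 0 < β) (hgrowth : ∀ x ξ, f x ξ ≤ β * (1 + Φ (frobNorm ξ)))
    (t : ℝ) (ht : 0 < t) (ξα : M32) (hξα : colsIn V ξα) :
    cellInf f ξα t (AdmVSet t V) = cellInf (fbar Φ P f) ξα t (AdmSet t) :=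
  stmt_0_general Φ hΦ V P hP f hf hf0 β hgrowth t ξα hξα
end
end

section
/- Let M>0, let K ⊂ ℝ³ be a compact set, and let f: K × B̄(0,M) → ℝ be continuous, where B̄(0,M) is the closed ball of radius M in ℝ^{3×3} for the Frobenius norm. Define the modulus Ψ(r) := sup{ |f(x,ξ) − f(x,ζ)| : x ∈ K, ξ, ζ ∈ B̄(0,M), |ξ−ζ| ≤ r }. Let Φ be a Young function and L a Lipschitz constant of Φ on [0, 2M]. For i = 1, 2 let V_i ⊆ ℝ³ be a linear subspace, P_i the orthogonal projection onto V_i, 𝐏_i the column-wise action on 3×3 matrices, and f̄_i(x,ξ) := f(x, 𝐏_iξ) + Φ(|ξ − 𝐏_iξ|). Then for every x ∈ K and every ξ ∈ ℝ^{3×3} with |ξ| ≤ M: |f̄₁(x,ξ) − f̄₂(x,ξ)| ≤ Ψ(M·‖P₁ − P₂‖) + L·M·‖P₁ − P₂‖, where ‖P₁ − P₂‖ is the operator norm of P₁ − P₂ on ℝ³. -/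
open MeasureTheory Filter

noncomputable section

/-- Euclidean norm on `ℝ³`. -/
def euclNorm (x : V3) : ℝ := Real.sqrt (∑ i, (x i) ^ 2)

/-- Operator norm (w.r.t. the Euclidean norm) of a map on `ℝ³`. -/
def opNormE (T : V3 → V3) : ℝ :=
  sSup {r : ℝ | ∃ x : V3, euclNorm x ≤ 1 ∧ r = euclNorm (T x)}

/-!
`𝐏₁ξ` and `𝐏₂ξ` lie in the ball of radius `M`, since orthogonal projections are contractions,
and their difference is `P₁ − P₂` acting column-wise, so its Frobenius norm is at most
`‖P₁ − P₂‖ |ξ| ≤ M ‖P₁ − P₂‖`; this bounds the `f`-terms by `Ψ`. The penalty arguments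
`|ξ − 𝐏ᵢξ|` lie in `[0, 2M]` and, by the reverse triangle inequality, differ by at most the same
amount, so the Lipschitz bound of `Φ` controls the penalty terms.
-/

section Frobenius

attribute [local instance] Matrix.frobeniusNormedAddCommGroup Matrix.frobeniusNormedSpace

theorem frobNorm_eq_norm {m n : ℕ} (A : Matrix (Fin m) (Fin n) ℝ) : frobNorm A = ‖A‖ := by
  rw [frobNorm, Matrix.frobenius_norm_def, Real.sqrt_eq_rpow]
  simp only [Real.norm_eq_abs, Real.rpow_two, sq_abs]

theorem frobNorm_sub_le {m n : ℕ} (A B : Matrix (Fin m) (Fin n) ℝ) :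
    frobNorm (A - B) ≤ frobNorm A + frobNorm B := by
  simpa only [frobNorm_eq_norm] using norm_sub_le A B

theorem abs_frobNorm_sub_frobNorm_le {m n : ℕ} (A B : Matrix (Fin m) (Fin n) ℝ) :
    |frobNorm A - frobNorm B| ≤ frobNorm (A - B) := by
  simpa only [frobNorm_eq_norm] using abs_norm_sub_norm_le A B

theorem frobNorm_sub_rev {m n : ℕ} (A B : Matrix (Fin m) (Fin n) ℝ) :
    frobNorm (A - B) = frobNorm (B - A) := by
  simpa only [frobNorm_eq_norm] using norm_sub_rev A B

theorem isCompact_setOf_frobNorm_le (m n : ℕ) (M : ℝ) :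
    IsCompact {A : Matrix (Fin m) (Fin n) ℝ | frobNorm A ≤ M} := by
  have h := isCompact_closedBall (0 : Matrix (Fin m) (Fin n) ℝ) M
  simp only [Metric.closedBall, dist_zero_right, ← frobNorm_eq_norm] at h
  exact h

end Frobenius

theorem euclNorm_eq_norm (x : V3) : euclNorm x = ‖WithLp.toLp 2 x‖ := by
  simp only [euclNorm, EuclideanSpace.norm_eq, Real.norm_eq_abs, sq_abs]

theorem frobNorm_sq_eq_sum_euclNorm_sq (A : M33) :
    frobNorm A ^ 2 = ∑ j, euclNorm (fun i => A i j) ^ 2 := by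
  simp only [frobNorm, euclNorm]
  rw [Real.sq_sqrt (by positivity), Finset.sum_comm]
  exact Finset.sum_congr rfl fun j _ => (Real.sq_sqrt (by positivity)).symm

theorem frobNorm_Pmat_le {T : V3 → V3} {C : ℝ} (hC : 0 ≤ C)
    (hT : ∀ v, euclNorm (T v) ≤ C * euclNorm v) (ξ : M33) :
    frobNorm (Pmat T ξ) ≤ C * frobNorm ξ := by
  have hsq : frobNorm (Pmat T ξ) ^ 2 ≤ (C * frobNorm ξ) ^ 2 := by
    rw [mul_pow, frobNorm_sq_eq_sum_euclNorm_sq, frobNorm_sq_eq_sum_euclNorm_sq, Finset.mul_sum]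
    gcongr with j
    rw [← mul_pow]
    exact pow_le_pow_left₀ (Real.sqrt_nonneg _) (hT _) 2
  exact (pow_le_pow_iff_left₀ (Real.sqrt_nonneg _) (mul_nonneg hC (Real.sqrt_nonneg _))
    two_ne_zero).1 hsq

theorem IsOrthProjOnto.euclNorm_apply_le {V : Submodule ℝ V3} {P : V3 → V3}
    (hP : IsOrthProjOnto V P) (x : V3) : euclNorm (P x) ≤ euclNorm x := by
  have hpyth : ∑ i, x i ^ 2 =
      ∑ i, P x i ^ 2 + ∑ i, (x i - P x i) ^ 2 + 2 * ∑ i, (x i - P x i) * P x i := by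
    rw [Finset.mul_sum, ← Finset.sum_add_distrib, ← Finset.sum_add_distrib]
    exact Finset.sum_congr rfl fun i _ => by ring
  rw [hP.2.2.2 x (P x) (hP.2.1 x)] at hpyth
  refine Real.sqrt_le_sqrt ?_
  have : 0 ≤ ∑ i, (x i - P x i) ^ 2 := by positivity
  linarith

theorem IsOrthProjOnto.frobNorm_Pmat_le {V : Submodule ℝ V3} {P : V3 → V3}
    (hP : IsOrthProjOnto V P) (ξ : M33) : frobNorm (Pmat P ξ) ≤ frobNorm ξ := by
  simpa only [one_mul] using
    _root_.frobNorm_Pmat_le zero_le_one (by simpa only [one_mul] using hP.euclNorm_apply_le) ξ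

theorem opNormE_nonneg (T : V3 → V3) : 0 ≤ opNormE T :=
  Real.sSup_nonneg fun _ ⟨_, _, hr⟩ => hr ▸ Real.sqrt_nonneg _

def IsLinearMap.euclideanCLM {T : V3 → V3} (hT : IsLinearMap ℝ T) :
    EuclideanSpace ℝ (Fin 3) →L[ℝ] EuclideanSpace ℝ (Fin 3) :=
  LinearMap.toContinuousLinearMap
    ((WithLp.linearEquiv 2 ℝ V3).symm.toLinearMap ∘ₗ IsLinearMap.mk' T hT ∘ₗ
      (WithLp.linearEquiv 2 ℝ V3).toLinearMap)

theorem IsLinearMap.opNormE_eq_norm_euclideanCLM {T : V3 → V3} (hT : IsLinearMap ℝ T) :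
    opNormE T = ‖hT.euclideanCLM‖ := by
  rw [← hT.euclideanCLM.sSup_unitClosedBall_eq_norm, opNormE]
  congr 1
  ext r
  constructor
  · rintro ⟨x, hx, rfl⟩
    refine ⟨WithLp.toLp 2 x, ?_, ?_⟩
    · simpa [euclNorm_eq_norm] using hx
    · simp [euclNorm_eq_norm, IsLinearMap.euclideanCLM]
  · rintro ⟨x, hx, rfl⟩
    refine ⟨WithLp.ofLp x, ?_, ?_⟩
    · simpa [euclNorm_eq_norm] using hx
    · simp [euclNorm_eq_norm, IsLinearMap.euclideanCLM]

theorem IsLinearMap.euclNorm_apply_le_opNormE {T : V3 → V3} (hT : IsLinearMap ℝ T) (v : V3) :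
    euclNorm (T v) ≤ opNormE T * euclNorm v := by
  rw [hT.opNormE_eq_norm_euclideanCLM, euclNorm_eq_norm, euclNorm_eq_norm]
  exact hT.euclideanCLM.le_opNorm (WithLp.toLp 2 v)

theorem frobNorm_Pmat_sub_Pmat_le {P₁ P₂ : V3 → V3} (h₁ : IsLinearMap ℝ P₁)
    (h₂ : IsLinearMap ℝ P₂) (ξ : M33) :
    frobNorm (Pmat P₁ ξ - Pmat P₂ ξ) ≤ opNormE (fun y => P₁ y - P₂ y) * frobNorm ξ :=
  have hT : IsLinearMap ℝ (fun y => P₁ y - P₂ y) :=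
    (IsLinearMap.mk' P₁ h₁ - IsLinearMap.mk' P₂ h₂).isLinear
  frobNorm_Pmat_le (opNormE_nonneg _) hT.euclNorm_apply_le_opNormE ξ

/-- The modulus `Ψ(r)` of `f` on `K × B̄(0,M)`. -/
def contModulus (K : Set V3) (M : ℝ) (f : V3 → M33 → ℝ) (r : ℝ) : ℝ :=
  sSup {e : ℝ | ∃ x' ∈ K, ∃ ξ' ζ' : M33, frobNorm ξ' ≤ M ∧ frobNorm ζ' ≤ M ∧
    frobNorm (ξ' - ζ') ≤ r ∧ e = |f x' ξ' - f x' ζ'|}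

theorem abs_sub_le_contModulus {K : Set V3} {M r : ℝ} {f : V3 → M33 → ℝ} (hK : IsCompact K)
    (hf : ContinuousOn (fun p : V3 × M33 => f p.1 p.2) (K ×ˢ {ξ : M33 | frobNorm ξ ≤ M}))
    {x : V3} (hx : x ∈ K) {ξ ζ : M33} (hξ : frobNorm ξ ≤ M) (hζ : frobNorm ζ ≤ M)
    (hr : frobNorm (ξ - ζ) ≤ r) : |f x ξ - f x ζ| ≤ contModulus K M f r := by
  obtain ⟨C, hC⟩ :=
    (hK.prod (isCompact_setOf_frobNorm_le 3 3 M)).exists_bound_of_continuousOn hf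
  refine le_csSup ⟨2 * C, ?_⟩ ⟨x, hx, ξ, ζ, hξ, hζ, hr, rfl⟩
  rintro - ⟨x', hx', ξ', ζ', hξ', hζ', -, rfl⟩
  have h₁ := hC (x', ξ') ⟨hx', hξ'⟩
  have h₂ := hC (x', ζ') ⟨hx', hζ'⟩
  rw [Real.norm_eq_abs] at h₁ h₂
  linarith [abs_sub (f x' ξ') (f x' ζ')]

theorem IsOrthProjOnto.frobNorm_sub_Pmat_mem_Icc {V : Submodule ℝ V3} {P : V3 → V3}
    (hP : IsOrthProjOnto V P) {M : ℝ} {ξ : M33} (hξ : frobNorm ξ ≤ M) :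
    frobNorm (ξ - Pmat P ξ) ∈ Set.Icc 0 (2 * M) :=
  ⟨Real.sqrt_nonneg _, by linarith [frobNorm_sub_le ξ (Pmat P ξ), hP.frobNorm_Pmat_le ξ]⟩

theorem abs_frobNorm_sub_Pmat_sub_le (P₁ P₂ : V3 → V3) (ξ : M33) :
    |frobNorm (ξ - Pmat P₁ ξ) - frobNorm (ξ - Pmat P₂ ξ)| ≤ frobNorm (Pmat P₁ ξ - Pmat P₂ ξ) := by
  simpa only [sub_sub_sub_cancel_left, frobNorm_sub_rev (Pmat P₂ ξ)] using
    abs_frobNorm_sub_frobNorm_le (ξ - Pmat P₁ ξ) (ξ - Pmat P₂ ξ)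

theorem stmt_14_general
    (M : ℝ) (K : Set V3) (hK : IsCompact K)
    (f : V3 → M33 → ℝ)
    (hf : ContinuousOn (fun p : V3 × M33 => f p.1 p.2) (K ×ˢ {ξ : M33 | frobNorm ξ ≤ M}))
    (Φ : ℝ → ℝ)
    (L : ℝ) (hL : 0 ≤ L) (hLip : LipschitzOnWith (Real.toNNReal L) Φ (Set.Icc 0 (2 * M)))
    (V₁ V₂ : Submodule ℝ V3) (P₁ P₂ : V3 → V3)
    (hP₁ : IsOrthProjOnto V₁ P₁) (hP₂ : IsOrthProjOnto V₂ P₂) :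
    ∀ x ∈ K, ∀ ξ : M33, frobNorm ξ ≤ M →
      |fbar Φ P₁ f x ξ - fbar Φ P₂ f x ξ| ≤
        sSup {e : ℝ | ∃ x' ∈ K, ∃ ξ' ζ' : M33, frobNorm ξ' ≤ M ∧ frobNorm ζ' ≤ M ∧
            frobNorm (ξ' - ζ') ≤ M * opNormE (fun y => P₁ y - P₂ y) ∧
            e = |f x' ξ' - f x' ζ'|}
          + L * M * opNormE (fun y => P₁ y - P₂ y) := by
  intro x hx ξ hξ
  set N := opNormE (fun y => P₁ y - P₂ y)
  have hdiff : frobNorm (Pmat P₁ ξ - Pmat P₂ ξ) ≤ M * N := by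
    rw [mul_comm]
    exact (frobNorm_Pmat_sub_Pmat_le hP₁.1 hP₂.1 ξ).trans
      (mul_le_mul_of_nonneg_left hξ (opNormE_nonneg _))
  have hf_part : |f x (Pmat P₁ ξ) - f x (Pmat P₂ ξ)| ≤ contModulus K M f (M * N) :=
    abs_sub_le_contModulus hK hf hx ((hP₁.frobNorm_Pmat_le ξ).trans hξ)
      ((hP₂.frobNorm_Pmat_le ξ).trans hξ) hdiff
  have hΦ_part :
      |Φ (frobNorm (ξ - Pmat P₁ ξ)) - Φ (frobNorm (ξ - Pmat P₂ ξ))| ≤ L * (M * N) := by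
    have hLip' := hLip.dist_le_mul _ (hP₁.frobNorm_sub_Pmat_mem_Icc hξ) _
      (hP₂.frobNorm_sub_Pmat_mem_Icc hξ)
    rw [Real.dist_eq, Real.dist_eq, Real.coe_toNNReal L hL] at hLip'
    exact hLip'.trans (mul_le_mul_of_nonneg_left
      ((abs_frobNorm_sub_Pmat_sub_le P₁ P₂ ξ).trans hdiff) hL)
  calc |fbar Φ P₁ f x ξ - fbar Φ P₂ f x ξ|
      ≤ |f x (Pmat P₁ ξ) - f x (Pmat P₂ ξ)|
          + |Φ (frobNorm (ξ - Pmat P₁ ξ)) - Φ (frobNorm (ξ - Pmat P₂ ξ))| := by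
        simpa only [fbar, add_sub_add_comm] using abs_add_le _ _
    _ ≤ contModulus K M f (M * N) + L * M * N := by linarith

/-- continuity of the penalized integrand with respect to the projection. -/
theorem stmt_14
    (M : ℝ) (hM : 0 < M) (K : Set V3) (hK : IsCompact K)
    (f : V3 → M33 → ℝ)
    (hf : ContinuousOn (fun p : V3 × M33 => f p.1 p.2) (K ×ˢ {ξ : M33 | frobNorm ξ ≤ M}))
    (Φ : ℝ → ℝ) (hΦ : IsYoung Φ)
    (L : ℝ) (hL : 0 ≤ L) (hLip : LipschitzOnWith (Real.toNNReal L) Φ (Set.Icc 0 (2 * M)))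
    (V₁ V₂ : Submodule ℝ V3) (P₁ P₂ : V3 → V3)
    (hP₁ : IsOrthProjOnto V₁ P₁) (hP₂ : IsOrthProjOnto V₂ P₂) :
    ∀ x ∈ K, ∀ ξ : M33, frobNorm ξ ≤ M →
      |fbar Φ P₁ f x ξ - fbar Φ P₂ f x ξ| ≤
        sSup {e : ℝ | ∃ x' ∈ K, ∃ ξ' ζ' : M33, frobNorm ξ' ≤ M ∧ frobNorm ζ' ≤ M ∧
            frobNorm (ξ' - ζ') ≤ M * opNormE (fun y => P₁ y - P₂ y) ∧
            e = |f x' ξ' - f x' ζ'|}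
          + L * M * opNormE (fun y => P₁ y - P₂ y) :=
  stmt_14_general M K hK f hf Φ L hL hLip V₁ V₂ P₁ P₂ hP₁ hP₂
end
end
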